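/- arXiv:2604.05233 — 4 statements merged into one kernel-verified Lean document; each statement's English description precedes it below -/
import Mathlib

section
/- Let V be a nonempty topological space and f : V → ℝ. Assume that for every a ∈ ℝ each of the sets V_{≥a} := {x ∈ V | f x ≥ a} and V_{≤a} := {x ∈ V | f x ≤ a} is closed, and that each of these sets either equals V or has empty interior. Then f is constant on V. -/
/-- Lemma 5.7: if all superlevel sets `{f ≥ a}` and sublevel sets `{f ≤ a}` are
closed and each of them is either the whole space or has empty interior, then
`f` is constant. -/
theorem constant_of_level_sets (V : Type*) [TopologicalSpace V] [Nonempty V]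
    (f : V → ℝ)
    (hge : ∀ a : ℝ, IsClosed {x : V | a ≤ f x} ∧
      ({x : V | a ≤ f x} = Set.univ ∨ interior {x : V | a ≤ f x} = ∅))
    (hle : ∀ a : ℝ, IsClosed {x : V | f x ≤ a} ∧
      ({x : V | f x ≤ a} = Set.univ ∨ interior {x : V | f x ≤ a} = ∅)) :
    ∀ x y : V, f x = f y := by
  have key : ∀ x y : V, f x < f y → False := by
    intro x y hxy
    set a : ℝ := (f x + f y) / 2 with ha
    have hxa : f x < a := by simp [ha]; linarith
    have hay : a < f y := by simp [ha]; linarith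
    -- B = {f ≤ a} is not univ, since y ∉ B
    have hBne : {z : V | f z ≤ a} ≠ Set.univ := by
      intro h
      have : y ∈ {z : V | f z ≤ a} := h ▸ Set.mem_univ y
      exact absurd this (by simp [Set.mem_setOf_eq]; linarith)
    have hBint : interior {z : V | f z ≤ a} = ∅ := (hle a).2.resolve_left hBne
    -- complement of A = {a ≤ f z} is open, contains x, and is contained in B
    have hAopen : IsOpen {z : V | a ≤ f z}ᶜ := (hge a).1.isOpen_compl
    have hxA : x ∈ {z : V | a ≤ f z}ᶜ := by
      simp [Set.mem_setOf_eq]; linarith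
    have hsub : {z : V | a ≤ f z}ᶜ ⊆ {z : V | f z ≤ a} := by
      intro z hz
      simp only [Set.mem_compl_iff, Set.mem_setOf_eq, not_le] at hz ⊢
      linarith
    have : x ∈ interior {z : V | f z ≤ a} :=
      interior_maximal hsub hAopen hxA
    rw [hBint] at this
    exact this
  intro x y
  rcases lt_trichotomy (f x) (f y) with h | h | h
  · exact absurd h (fun h => key x y h)
  · exact h
  · exact absurd h (fun h => key y x h)
end

section
/- Fix an integer n ≥ 1 and a real number N > 0. Let Ω := {z ∈ ℂⁿ : 0 < |z₁| < 1 and |z_k| < 1 for 2 ≤ k ≤ n}, and define χ(z) := −N·( log(−log |z₁|²) + Σ_{k=2}^n log(1 − |z_k|²) ). Let Q ∈ ℂ^{n−1} satisfy |Q_k| < 1 for all k, and set Q' := (0, Q) ∈ ℂⁿ. Then the Lelong number of χ at Q' is zero, i.e. liminf_{z → Q', z ∈ Ω} χ(z) / log ‖z − Q'‖ = 0. -/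
/-!
Near `Q'` inside `Ω` the term `log (-log ‖z₁‖²)` tends to `+∞` while the remaining sum stays
bounded, so `χ ≤ 0` there; as `log ‖z - Q'‖ < 0`, the quotient is eventually nonnegative.
Along the axis `t ↦ Q' + t e₁` (`t ↓ 0`) it equals `2N (log x + B) / x`, where `x = -log t² → ∞`
and `B` is the constant value of the remaining sum, so it tends to `0`. A function that is
eventually nonnegative and tends to `0` along a finer filter has liminf `0`.
-/

open Filter Topology Real Set Finset

theorem liminf_eq_of_eventually_ge_of_tendsto {α β : Type*} [ConditionallyCompleteLinearOrder β]
    [TopologicalSpace β] [OrderTopology β] {f : α → β} {F G : Filter α} [G.NeBot] {a : β}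
    (hGF : G ≤ F) (hF : ∀ᶠ x in F, a ≤ f x) (hG : Tendsto f G (𝓝 a)) : liminf f F = a := by
  have hcobG : G.IsCoboundedUnder (· ≥ ·) f := hG.isBoundedUnder_le.isCoboundedUnder_ge
  refine le_antisymm ?_ (le_liminf_of_le (hcobG.mono (map_mono hGF)) hF)
  calc liminf f F ≤ liminf f G := liminf_le_liminf_of_le hGF ⟨a, hF⟩ hcobG
    _ = a := hG.liminf_eq

theorem tendsto_log_add_const_div_atTop (c : ℝ) :
    Tendsto (fun x => (log x + c) / x) atTop (𝓝 0) := by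
  have hlog := tendsto_pow_log_div_mul_add_atTop 1 0 1 one_ne_zero
  simp only [pow_one, one_mul, add_zero] at hlog
  simpa [add_div] using hlog.add ((tendsto_const_nhds (x := c)).div_atTop tendsto_id)

theorem tendsto_neg_log_sq_nhdsGT_zero : Tendsto (fun r : ℝ => -log (r ^ 2)) (𝓝[>] 0) atTop := by
  have hsq : Tendsto (fun r : ℝ => r ^ 2) (𝓝[>] 0) (𝓝[>] 0) := by
    refine tendsto_nhdsWithin_iff.2 ⟨?_, ?_⟩
    · simpa using ((continuous_pow 2).tendsto (0 : ℝ)).mono_left nhdsWithin_le_nhds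
    · filter_upwards [self_mem_nhdsWithin] with r (hr : 0 < r) using pow_pos hr 2
  exact tendsto_neg_atBot_atTop.comp (tendsto_log_nhdsGT_zero.comp hsq)

theorem eventually_log_norm_sub_neg {E : Type*} [NormedAddCommGroup E] (x : E) :
    ∀ᶠ z in 𝓝[≠] x, log ‖z - x‖ < 0 := by
  filter_upwards [self_mem_nhdsWithin, nhdsWithin_le_nhds (Metric.ball_mem_nhds x one_pos)]
    with z (hne : z ≠ x) hz
  exact log_neg (norm_pos_iff.2 (sub_ne_zero.2 hne)) (mem_ball_iff_norm.1 hz)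

section PoincarePotential

variable {ι : Type*} {i : ι} {Q : EuclideanSpace ℂ ι}

def puncturedPolydisc (i : ι) : Set (EuclideanSpace ℂ ι) := {z | 0 < ‖z i‖ ∧ ∀ k, ‖z k‖ < 1}

noncomputable def poincarePotential [Fintype ι] [DecidableEq ι] (N : ℝ) (i : ι)
    (z : EuclideanSpace ℂ ι) : ℝ :=
  -N * (log (-log (‖z i‖ ^ 2)) + ∑ k ∈ univ \ {i}, log (1 - ‖z k‖ ^ 2))

theorem nhdsWithin_puncturedPolydisc_le_nhdsNE (hQi : Q i = 0) :
    𝓝[puncturedPolydisc i] Q ≤ 𝓝[≠] Q :=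
  nhdsWithin_mono _ fun z hz (hzQ : z = Q) => by simp [hzQ, hQi, puncturedPolydisc] at hz

theorem tendsto_norm_apply_nhdsWithin_puncturedPolydisc (hQi : Q i = 0) :
    Tendsto (fun z : EuclideanSpace ℂ ι => ‖z i‖) (𝓝[puncturedPolydisc i] Q) (𝓝[>] 0) := by
  refine tendsto_nhdsWithin_iff.2 ⟨?_, eventually_mem_nhdsWithin.mono fun z hz => hz.1⟩
  have hcont : Continuous fun z : EuclideanSpace ℂ ι => ‖z i‖ :=
    continuous_norm.comp (PiLp.continuous_apply 2 _ i)
  simpa [hQi] using (hcont.tendsto Q).mono_left nhdsWithin_le_nhds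

theorem continuousAt_sum_log_one_sub_norm_sq (hQ : ∀ k, ‖Q k‖ < 1) (s : Finset ι) :
    ContinuousAt (fun z : EuclideanSpace ℂ ι => ∑ k ∈ s, log (1 - ‖z k‖ ^ 2)) Q := by
  refine tendsto_finsetSum _ fun k _ => ContinuousAt.log ?_ ?_
  · exact (continuous_const.sub
      ((continuous_norm.comp (PiLp.continuous_apply 2 _ k)).pow 2)).continuousAt
  · have := hQ k
    nlinarith [norm_nonneg (Q k)]

theorem eventually_poincarePotential_nonpos [Fintype ι] [DecidableEq ι] {N : ℝ} (hN : 0 ≤ N)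
    (hQi : Q i = 0) (hQ : ∀ k, ‖Q k‖ < 1) :
    ∀ᶠ z in 𝓝[puncturedPolydisc i] Q, poincarePotential N i z ≤ 0 := by
  have hlog : Tendsto (fun z : EuclideanSpace ℂ ι => log (-log (‖z i‖ ^ 2)))
      (𝓝[puncturedPolydisc i] Q) atTop :=
    tendsto_log_atTop.comp
      (tendsto_neg_log_sq_nhdsGT_zero.comp (tendsto_norm_apply_nhdsWithin_puncturedPolydisc hQi))
  have hsum := (continuousAt_sum_log_one_sub_norm_sq hQ (univ \ {i})).tendsto.mono_left
    (nhdsWithin_le_nhds (s := puncturedPolydisc i))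
  filter_upwards [(hlog.atTop_add hsum).eventually_ge_atTop 0] with z hz
  exact mul_nonpos_of_nonpos_of_nonneg (neg_nonpos.2 hN) hz

theorem tendsto_add_single_nhdsWithin_puncturedPolydisc [Fintype ι] [DecidableEq ι]
    (hQi : Q i = 0) (hQ : ∀ k, ‖Q k‖ < 1) :
    Tendsto (fun t : ℝ => Q + EuclideanSpace.single i (t : ℂ)) (𝓝[>] 0)
      (𝓝[puncturedPolydisc i] Q) := by
  refine tendsto_nhdsWithin_iff.2 ⟨?_, ?_⟩
  · refine tendsto_iff_norm_sub_tendsto_zero.2 ?_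
    simpa using (continuous_abs.tendsto' (0 : ℝ) 0 abs_zero).mono_left nhdsWithin_le_nhds
  · filter_upwards [Ioo_mem_nhdsGT one_pos] with t ⟨ht0, ht1⟩
    refine ⟨by simpa [hQi, abs_of_pos ht0], fun k => ?_⟩
    rcases eq_or_ne k i with rfl | hk
    · simpa [hQi, abs_of_pos ht0]
    · simpa [hk] using hQ k

theorem poincarePotential_add_single [Fintype ι] [DecidableEq ι] (N : ℝ) (hQi : Q i = 0)
    (t : ℝ) :
    poincarePotential N i (Q + EuclideanSpace.single i (t : ℂ)) =
      -N * (log (-log (t ^ 2)) + ∑ k ∈ univ \ {i}, log (1 - ‖Q k‖ ^ 2)) := by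
  have hsum : ∑ k ∈ univ \ {i}, log (1 - ‖(Q + EuclideanSpace.single i (t : ℂ)) k‖ ^ 2) =
      ∑ k ∈ univ \ {i}, log (1 - ‖Q k‖ ^ 2) :=
    sum_congr rfl fun k hk => by simp [show k ≠ i by simpa using hk]
  rw [poincarePotential, hsum]
  simp [hQi]

theorem tendsto_poincarePotential_add_single_div_log_norm [Fintype ι] [DecidableEq ι] (N : ℝ)
    (hQi : Q i = 0) :
    Tendsto (fun t : ℝ => poincarePotential N i (Q + EuclideanSpace.single i (t : ℂ)) /
      log ‖Q + EuclideanSpace.single i (t : ℂ) - Q‖) (𝓝[>] 0) (𝓝 0) := by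
  have hlim := ((tendsto_log_add_const_div_atTop
    (∑ k ∈ univ \ {i}, log (1 - ‖Q k‖ ^ 2))).const_mul (2 * N)).comp tendsto_neg_log_sq_nhdsGT_zero
  rw [mul_zero] at hlim
  refine hlim.congr' ?_
  filter_upwards [self_mem_nhdsWithin] with t (ht : 0 < t)
  have hlog : log (t ^ 2) = 2 * log t := by simp [log_pow]
  simp only [Function.comp_apply, poincarePotential_add_single N hQi, add_sub_cancel_left,
    PiLp.norm_single, Complex.norm_real, norm_eq_abs, abs_of_pos ht, hlog]
  ring

end PoincarePotential

/-- Lemma 5.6 (second assertion): the Lelong number of the Poincaré-type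
potential `χ` at any point `Q' = (0, Q)` of the puncture divisor is zero. -/
theorem poincare_potential_lelong_zero (n : ℕ) (hn : 0 < n) (N : ℝ) (hN : 0 < N)
    (Ω : Set (EuclideanSpace ℂ (Fin n)))
    (hΩ : Ω = {z : EuclideanSpace ℂ (Fin n) |
      0 < ‖z ⟨0, hn⟩‖ ∧ ∀ k, ‖z k‖ < 1})
    (χ : EuclideanSpace ℂ (Fin n) → ℝ)
    (hχ : ∀ z, χ z =
      -N * (Real.log (-Real.log (‖z ⟨0, hn⟩‖ ^ 2)) +
        ∑ k ∈ Finset.univ \ {(⟨0, hn⟩ : Fin n)},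
          Real.log (1 - ‖z k‖ ^ 2)))
    (Q' : EuclideanSpace ℂ (Fin n))
    (hQ0 : Q' ⟨0, hn⟩ = 0)
    (hQ : ∀ k, ‖Q' k‖ < 1) :
    Filter.liminf (fun z : EuclideanSpace ℂ (Fin n) =>
      χ z / Real.log ‖z - Q'‖) (nhdsWithin Q' Ω) = 0 := by
  obtain rfl : Ω = puncturedPolydisc ⟨0, hn⟩ := hΩ
  obtain rfl : χ = poincarePotential N ⟨0, hn⟩ := funext hχ
  refine liminf_eq_of_eventually_ge_of_tendsto
    (tendsto_add_single_nhdsWithin_puncturedPolydisc hQ0 hQ) ?_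
    (tendsto_map'_iff.2 (tendsto_poincarePotential_add_single_div_log_norm N hQ0))
  filter_upwards [eventually_poincarePotential_nonpos hN.le hQ0 hQ,
    nhdsWithin_puncturedPolydisc_le_nhdsNE hQ0 (eventually_log_norm_sub_neg Q')] with z hχz hlog
  exact div_nonneg_of_nonpos hχz hlog.le
end

section
/- Let 0 < R ≤ 1 and set A := {w ∈ ℂ : 0 < |w| < R}. Let g : ℂ → ℝ be continuous and strictly positive on A, and assume that log ∘ g satisfies the circle sub-mean value inequality on A: for every a ∈ A and every r > 0 with the closed disc of center a and radius r contained in A, log g(a) ≤ (2π)⁻¹ ∫₀^{2π} log g(a + r·e^{iθ}) dθ. Assume moreover that w ↦ g(w)/|w|² is Lebesgue-integrable on A. Then for every z with 0 < |z| ≤ R/5 one has g(z) ≤ (9/π) ∫_A g(w)/|w|² dλ(w), where λ denotes the Lebesgue measure on ℂ. -/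
/-!
Fix `z` and put `ρ = |z|/2`; the closed disc `B` of center `z` and radius `ρ` lies in the
annulus `ρ ≤ |w| ≤ 3ρ`, hence inside `A`. By Jensen's inequality for the convex function `exp`,
the circle sub-mean value inequality for `log g` gives one for `g` on every circle of center `z`
and radius `r ≤ ρ`; integrating against `2πr dr` (polar coordinates) yields
`πρ² g(z) ≤ ∫_B g`. Finally `g ≤ 9ρ² g/|w|²` on `B` since `|w| ≤ 3ρ` there.
-/

open MeasureTheory

open Metric Set Real Interval

theorem ConvexOn.map_circleAverage_le {φ : ℝ → ℝ} (hφ : ConvexOn ℝ univ φ) (hφc : Continuous φ)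
    {f : ℂ → ℝ} {c : ℂ} {r : ℝ} (hf : CircleIntegrable f c r)
    (hφf : CircleIntegrable (φ ∘ f) c r) :
    φ (circleAverage f c r) ≤ circleAverage (φ ∘ f) c r := by
  have hvol : volume (Ι 0 (2 * π)) = ENNReal.ofReal (2 * π) := by
    rw [uIoc_of_le two_pi_pos.le, Real.volume_Ioc, sub_zero]
  simp only [circleAverage_eq_intervalAverage]
  refine hφ.map_set_average_le hφc.continuousOn isClosed_univ ?_ ?_ (by simp)
    (intervalIntegrable_iff.1 hf) (intervalIntegrable_iff.1 hφf)
  · exact hvol ▸ (ENNReal.ofReal_pos.2 two_pi_pos).ne'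
  · exact hvol ▸ ENNReal.ofReal_ne_top

theorem le_circleAverage_of_log_le_circleAverage_log {f : ℂ → ℝ} {c : ℂ} {r : ℝ}
    (hf : ContinuousOn f (sphere c |r|)) (hpos : ∀ w ∈ sphere c |r|, 0 < f w) (hc : 0 < f c)
    (h : log (f c) ≤ circleAverage (log ∘ f) c r) :
    f c ≤ circleAverage f c r := by
  have hlog : ContinuousOn (log ∘ f) (sphere c |r|) :=
    hf.log fun w hw => (hpos w hw).ne'
  calc f c = exp (log (f c)) := (exp_log hc).symm
    _ ≤ exp (circleAverage (log ∘ f) c r) := exp_le_exp.2 h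
    _ ≤ circleAverage (exp ∘ log ∘ f) c r :=
      convexOn_exp.map_circleAverage_le continuous_exp hlog.circleIntegrable'
        (continuous_exp.comp_continuousOn hlog).circleIntegrable'
    _ = circleAverage f c r :=
      circleAverage_congr_sphere fun w hw => exp_log (hpos w hw)

section

variable {E : Type*} [NormedAddCommGroup E] [NormedSpace ℝ E]

theorem add_polarCoord_symm_eq_circleMap (c : ℂ) (p : ℝ × ℝ) :
    c + Complex.polarCoord.symm p = circleMap c p.1 p.2 := by
  rw [Complex.polarCoord_symm_apply, circleMap, Complex.exp_mul_I]
  simp [← Complex.ofReal_cos, ← Complex.ofReal_sin]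

theorem integral_Ioo_circleMap_eq_two_pi_smul_circleAverage (f : ℂ → E) (c : ℂ) (r : ℝ) :
    ∫ θ in Ioo (-π) π, f (circleMap c r θ) = (2 * π) • circleAverage f c r := by
  have hper := ((periodic_circleMap c r).comp f).intervalIntegral_add_eq (-π) 0
  rw [circleAverage_def, smul_inv_smul₀ two_pi_pos.ne', ← integral_Ioc_eq_integral_Ioo,
    ← intervalIntegral.integral_of_le (by linarith [pi_pos])]
  rwa [zero_add, show -π + 2 * π = π by ring] at hper

theorem setIntegral_closedBall_eq_setIntegral_polar (f : ℂ → E) (c : ℂ) (ρ : ℝ) :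
    ∫ w in closedBall c ρ, f w = ∫ p in Ioc 0 ρ ×ˢ Ioo (-π) π, p.1 • f (circleMap c p.1 p.2) := by
  calc ∫ w in closedBall c ρ, f w = ∫ w, (closedBall c ρ).indicator f (c + w) := by
        rw [← integral_indicator measurableSet_closedBall, integral_add_left_eq_self]
    _ = ∫ p in polarCoord.target, p.1 • (closedBall c ρ).indicator f (circleMap c p.1 p.2) := by
        simp only [← add_polarCoord_symm_eq_circleMap]
        exact (Complex.integral_comp_polarCoord_symm _).symm
    _ = ∫ p in polarCoord.target,
          (Iic ρ ×ˢ univ).indicator (fun p => p.1 • f (circleMap c p.1 p.2)) p := by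
        refine setIntegral_congr_fun polarCoord.open_target.measurableSet fun p hp => ?_
        have hmem : circleMap c p.1 p.2 ∈ closedBall c ρ ↔ p.1 ≤ ρ := by
          rw [mem_closedBall, dist_eq_norm, circleMap_sub_center, norm_circleMap_zero,
            abs_of_pos (show 0 < p.1 from hp.1)]
        by_cases hpρ : p.1 ≤ ρ <;> simp [hmem, hpρ]
    _ = _ := by
        rw [setIntegral_indicator (measurableSet_Iic.prod MeasurableSet.univ), polarCoord_target,
          prod_inter_prod, Ioi_inter_Iic, inter_univ]

theorem setIntegral_closedBall_eq_setIntegral_circleAverage {f : ℂ → E} {c : ℂ} {ρ : ℝ}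
    (hf : ContinuousOn f (closedBall c ρ)) :
    ∫ w in closedBall c ρ, f w = ∫ r in Ioc 0 ρ, (2 * π * r) • circleAverage f c r := by
  have hcont : ContinuousOn (fun p : ℝ × ℝ => p.1 • f (circleMap c p.1 p.2))
      (Icc 0 ρ ×ˢ Icc (-π) π) := by
    refine continuous_fst.continuousOn.smul (hf.comp circleMap.continuous.continuousOn ?_)
    rintro p ⟨⟨hp₀, hpρ⟩, -⟩
    exact closedBall_subset_closedBall hpρ (circleMap_mem_closedBall c hp₀ p.2)
  have hint := (hcont.integrableOn_compact (μ := volume.prod volume)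
    (isCompact_Icc.prod isCompact_Icc)).mono_set
    (prod_mono Ioc_subset_Icc_self Ioo_subset_Icc_self)
  rw [setIntegral_closedBall_eq_setIntegral_polar, Measure.volume_eq_prod,
    setIntegral_prod _ hint]
  refine setIntegral_congr_fun measurableSet_Ioc fun r _ => ?_
  rw [integral_smul, integral_Ioo_circleMap_eq_two_pi_smul_circleAverage, smul_smul, mul_comm]

end

theorem mul_le_setIntegral_closedBall_of_le_circleAverage {f : ℂ → ℝ} {c : ℂ} {ρ : ℝ}
    (hρ : 0 ≤ ρ) (hf : ContinuousOn f (closedBall c ρ))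
    (h : ∀ r ∈ Ioc 0 ρ, f c ≤ circleAverage f c r) :
    π * ρ ^ 2 * f c ≤ ∫ w in closedBall c ρ, f w := by
  have hlhs : ∫ r in Ioc 0 ρ, 2 * π * r * f c = π * ρ ^ 2 * f c := by
    rw [← intervalIntegral.integral_of_le hρ, intervalIntegral.integral_mul_const,
      intervalIntegral.integral_const_mul, integral_id]
    ring
  have havg : ContinuousOn (circleAverage f c) (Icc 0 ρ) :=
    ContinuousOn.circleAverage (hf.mono fun w hw => by simpa [dist_eq_norm] using hw.2)
      fun r hr => hr.1
  rw [setIntegral_closedBall_eq_setIntegral_circleAverage hf, ← hlhs]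
  refine setIntegral_mono_on (by fun_prop : Continuous fun r => 2 * π * r * f c).integrableOn_Ioc
    ((continuousOn_const.mul continuousOn_id).smul havg |>.integrableOn_Icc.mono_set
      Ioc_subset_Icc_self) measurableSet_Ioc fun r hr => ?_
  exact mul_le_mul_of_nonneg_left (h r hr) (mul_nonneg two_pi_pos.le hr.1.le)

theorem norm_mem_Icc_of_mem_closedBall_half_norm {F : Type*} [SeminormedAddCommGroup F]
    {z w : F} (hw : w ∈ closedBall z (‖z‖ / 2)) : ‖w‖ ∈ Icc (‖z‖ / 2) (3 * (‖z‖ / 2)) := by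
  rw [mem_closedBall, dist_eq_norm] at hw
  constructor <;> linarith [norm_sub_norm_le z w, norm_sub_norm_le w z, norm_sub_rev w z]

theorem setIntegral_le_sq_mul_setIntegral_div_norm_sq {F : Type*} [NormedAddCommGroup F]
    [MeasurableSpace F] {μ : Measure F} {s : Set F} {g : F → ℝ} {M : ℝ} (hs : MeasurableSet s)
    (hs₀ : (0 : F) ∉ s) (hM : ∀ w ∈ s, ‖w‖ ≤ M) (hg : ∀ w ∈ s, 0 ≤ g w)
    (hgi : IntegrableOn g s μ) (hgi' : IntegrableOn (fun w => g w / ‖w‖ ^ 2) s μ) :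
    ∫ w in s, g w ∂μ ≤ M ^ 2 * ∫ w in s, g w / ‖w‖ ^ 2 ∂μ := by
  rw [← integral_const_mul]
  refine setIntegral_mono_on hgi (hgi'.const_mul _) hs fun w hw => ?_
  have hw₀ : 0 < ‖w‖ := norm_pos_iff.2 (ne_of_mem_of_not_mem hw hs₀)
  calc g w = ‖w‖ ^ 2 * (g w / ‖w‖ ^ 2) := by field_simp
    _ ≤ M ^ 2 * (g w / ‖w‖ ^ 2) :=
      mul_le_mul_of_nonneg_right (pow_le_pow_left₀ hw₀.le (hM w hw) 2)
        (div_nonneg (hg w hw) (by positivity))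

theorem log_subharmonic_pointwise_bound_general (R : ℝ)
    (g : ℂ → ℝ)
    (hcont : ContinuousOn g {w : ℂ | 0 < ‖w‖ ∧ ‖w‖ < R})
    (hpos : ∀ w : ℂ, 0 < ‖w‖ → ‖w‖ < R → 0 < g w)
    (hsub : ∀ a : ℂ, 0 < ‖a‖ → ‖a‖ < R → ∀ r : ℝ, 0 < r →
      Metric.closedBall a r ⊆ {w : ℂ | 0 < ‖w‖ ∧ ‖w‖ < R} →
      Real.log (g a) ≤ (2 * Real.pi)⁻¹ *
        ∫ θ in (0:ℝ)..(2 * Real.pi),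
          Real.log (g (a + r * Complex.exp (θ * Complex.I))))
    (hint : IntegrableOn (fun w : ℂ => g w / ‖w‖ ^ 2)
      {w : ℂ | 0 < ‖w‖ ∧ ‖w‖ < R}) :
    ∀ z : ℂ, 0 < ‖z‖ → ‖z‖ ≤ R / 5 →
      g z ≤ (9 / Real.pi) *
        ∫ w in {w : ℂ | 0 < ‖w‖ ∧ ‖w‖ < R},
          g w / ‖w‖ ^ 2 := by
  intro z hz₀ hz
  set A := {w : ℂ | 0 < ‖w‖ ∧ ‖w‖ < R}
  set ρ := ‖z‖ / 2 with hρ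
  have hρ₀ : 0 < ρ := by positivity
  have h3ρ : 3 * ρ < R := by linarith
  have hnorm : ∀ w ∈ closedBall z ρ, ‖w‖ ∈ Icc ρ (3 * ρ) :=
    fun w => norm_mem_Icc_of_mem_closedBall_half_norm
  have hball : closedBall z ρ ⊆ A := fun w hw =>
    ⟨hρ₀.trans_le (hnorm w hw).1, (hnorm w hw).2.trans_lt h3ρ⟩
  have hmean (r : ℝ) (hr : r ∈ Ioc 0 ρ) : g z ≤ circleAverage g z r := by
    have hrA : closedBall z r ⊆ A := (closedBall_subset_closedBall hr.2).trans hball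
    have hsph : sphere z |r| ⊆ A := (abs_of_pos hr.1).symm ▸ sphere_subset_closedBall.trans hrA
    -- the conclusion of `hsub` is `circleAverage (log ∘ g) z r` with its definition unfolded
    exact le_circleAverage_of_log_le_circleAverage_log (hcont.mono hsph)
      (fun w hw => hpos w (hsph hw).1 (hsph hw).2) (hpos z hz₀ (by linarith))
      (hsub z hz₀ (by linarith) r hr.1 hrA)
  have harea : π * ρ ^ 2 * g z ≤ ∫ w in closedBall z ρ, g w :=
    mul_le_setIntegral_closedBall_of_le_circleAverage (by positivity) (hcont.mono hball) hmean
  have hweight := setIntegral_le_sq_mul_setIntegral_div_norm_sq (μ := volume)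
    measurableSet_closedBall (fun h => (hball h).1.ne' norm_zero)
    (fun w hw => (hnorm w hw).2) (fun w hw => (hpos w (hball hw).1 (hball hw).2).le)
    ((hcont.mono hball).integrableOn_compact (isCompact_closedBall z ρ)) (hint.mono_set hball)
  have hsubset : ∫ w in closedBall z ρ, g w / ‖w‖ ^ 2 ≤ ∫ w in A, g w / ‖w‖ ^ 2 :=
    setIntegral_mono_set hint (ae_restrict_of_forall_mem (by measurability) fun w hw =>
      div_nonneg (hpos w hw.1 hw.2).le (by positivity)) hball.eventuallyLE
  refine le_of_mul_le_mul_left ?_ (by positivity : 0 < π * ρ ^ 2)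
  calc π * ρ ^ 2 * g z ≤ (3 * ρ) ^ 2 * ∫ w in closedBall z ρ, g w / ‖w‖ ^ 2 :=
        harea.trans hweight
    _ ≤ (3 * ρ) ^ 2 * ∫ w in A, g w / ‖w‖ ^ 2 := by gcongr
    _ = π * ρ ^ 2 * (9 / π * ∫ w in A, g w / ‖w‖ ^ 2) := by field_simp; ring

/-- The key estimate in the proof of Lemma 7.2: if `g` is continuous and
positive on the punctured disc `0 < |w| < R`, `log ∘ g` satisfies the circle
sub-mean value inequality there, and `g(w)/|w|²` is Lebesgue-integrable, then
`g(z) ≤ (9/π) ∫ g(w)/|w|² dλ(w)` for `0 < |z| ≤ R/5`. -/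
theorem log_subharmonic_pointwise_bound (R : ℝ) (hR0 : 0 < R) (hR1 : R ≤ 1)
    (g : ℂ → ℝ)
    (hcont : ContinuousOn g {w : ℂ | 0 < ‖w‖ ∧ ‖w‖ < R})
    (hpos : ∀ w : ℂ, 0 < ‖w‖ → ‖w‖ < R → 0 < g w)
    (hsub : ∀ a : ℂ, 0 < ‖a‖ → ‖a‖ < R → ∀ r : ℝ, 0 < r →
      Metric.closedBall a r ⊆ {w : ℂ | 0 < ‖w‖ ∧ ‖w‖ < R} →
      Real.log (g a) ≤ (2 * Real.pi)⁻¹ *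
        ∫ θ in (0:ℝ)..(2 * Real.pi),
          Real.log (g (a + r * Complex.exp (θ * Complex.I))))
    (hint : IntegrableOn (fun w : ℂ => g w / ‖w‖ ^ 2)
      {w : ℂ | 0 < ‖w‖ ∧ ‖w‖ < R}) :
    ∀ z : ℂ, 0 < ‖z‖ → ‖z‖ ≤ R / 5 →
      g z ≤ (9 / Real.pi) *
        ∫ w in {w : ℂ | 0 < ‖w‖ ∧ ‖w‖ < R},
          g w / ‖w‖ ^ 2 :=
  log_subharmonic_pointwise_bound_general R g hcont hpos hsub hint
end

section
/- Let n ≥ l ≥ 1 be integers and let 0 < R' < R ≤ 1. Set A := {z ∈ ℂⁿ : 0 < |z_i| < R for 1 ≤ i ≤ l, and |z_i| < R for l < i ≤ n}. Let H : ℂⁿ → ℝ be continuous and nonnegative on A. Assume: for every ε > 0, every index 1 ≤ i ≤ l, and every z ∈ A, the one-variable function φ(ζ) := H(z₁, …, z_{i−1}, ζ, z_{i+1}, …, z_n)·|ζ|^ε satisfies (i) for every a with 0 < |a| < R and every r > 0 with the closed disc of center a and radius r contained in {ζ ∈ ℂ : 0 < |ζ| < R}, φ(a) ≤ (2π)⁻¹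 ∫₀^{2π} φ(a + r·e^{iθ}) dθ, and (ii) φ(ζ) → 0 as ζ → 0 with ζ ≠ 0. Then for every z ∈ A with |z_i| ≤ R' for all 1 ≤ i ≤ l, one has H(z) ≤ sup { H(w) : |w_i| = R' for 1 ≤ i ≤ l and w_k = z_k for l < k ≤ n }. -/
/-!
Perturbing a function with the local sub-mean-value property by `η ‖ζ - c‖²` makes that
property strict, so the perturbation attains its maximum over a closed disc on the boundary
circle; letting `η → 0` gives the maximum principle on discs. The twisted function
`f ζ ‖ζ‖ ^ ε` extends continuously by `0` across the puncture, where it trivially satisfies the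
sub-mean-value inequality, so `f a ‖a‖ ^ ε ≤ C R' ^ ε` whenever `f ≤ C` on `‖ζ‖ = R'`; letting
`ε → 0` removes the twist. On the polydisk, the punctured coordinates are moved to the circle
`‖ζ‖ = R'` one at a time by the one-variable principle, which does not change the torus fiber.
-/

open Metric Filter Topology Real

theorem circleAverage_norm_sub_sq (c p : ℂ) (r : ℝ) :
    circleAverage (fun x => ‖x - c‖ ^ 2) p r = ‖p - c‖ ^ 2 + r ^ 2 := by
  set q := p - c
  have hexpand : ∀ θ : ℝ, ‖circleMap p r θ - c‖ ^ 2
      = (‖q‖ ^ 2 + r ^ 2) + (2 * r * q.re * cos θ + 2 * r * q.im * sin θ) := by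
    intro θ
    rw [circleMap, add_sub_right_comm, Complex.sq_norm, Complex.sq_norm, Complex.exp_mul_I]
    simp only [Complex.normSq_apply, Complex.add_re, Complex.add_im, Complex.mul_re,
      Complex.mul_im, Complex.ofReal_re, Complex.ofReal_im, Complex.I_re, Complex.I_im,
      Complex.cos_ofReal_re, Complex.sin_ofReal_re, Complex.cos_ofReal_im, Complex.sin_ofReal_im]
    linear_combination r ^ 2 * sin_sq_add_cos_sq θ
  have hcos : Continuous fun θ : ℝ => 2 * r * q.re * cos θ := by fun_prop
  have hsin : Continuous fun θ : ℝ => 2 * r * q.im * sin θ := by fun_prop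
  simp only [circleAverage_def, hexpand, smul_eq_mul]
  rw [intervalIntegral.integral_add intervalIntegrable_const
      ((hcos.fun_add hsin).intervalIntegrable _ _),
    intervalIntegral.integral_add (hcos.intervalIntegrable _ _) (hsin.intervalIntegrable _ _),
    intervalIntegral.integral_const, intervalIntegral.integral_const_mul,
    intervalIntegral.integral_const_mul, integral_cos, integral_sin]
  field_simp
  simp

theorem exists_mem_sphere_isMaxOn_of_lt_circleAverage {φ : ℂ → ℝ} {c : ℂ} {ρ : ℝ}
    (hφ : ContinuousOn φ (closedBall c ρ))
    (hmean : ∀ p ∈ ball c ρ, ∃ r > 0, sphere p r ⊆ closedBall c ρ ∧ φ p < circleAverage φ p r)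
    (hne : (closedBall c ρ).Nonempty) :
    ∃ p ∈ sphere c ρ, IsMaxOn φ (closedBall c ρ) p := by
  obtain ⟨p, hp, hmax⟩ := (isCompact_closedBall c ρ).exists_isMaxOn hne hφ
  refine ⟨p, ?_, hmax⟩
  by_contra hsphere
  obtain ⟨r, hr, hsub, hlt⟩ := hmean p (lt_of_le_of_ne hp hsphere)
  have hle : circleAverage φ p r ≤ φ p :=
    circleAverage_mono_on_of_le_circle ((hφ.mono hsub).circleIntegrable hr.le)
      fun x hx => hmax (hsub (by rwa [abs_of_pos hr] at hx))
  exact hle.not_gt hlt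

theorem le_of_forall_mem_sphere_le_of_le_circleAverage {ψ : ℂ → ℝ} {c : ℂ} {ρ M : ℝ}
    (hψ : ContinuousOn ψ (closedBall c ρ))
    (hmean : ∀ p ∈ ball c ρ, ∃ r > 0, sphere p r ⊆ closedBall c ρ ∧ ψ p ≤ circleAverage ψ p r)
    (hM : ∀ ζ ∈ sphere c ρ, ψ ζ ≤ M) {a : ℂ} (ha : a ∈ closedBall c ρ) : ψ a ≤ M := by
  have hperturbed : ∀ η > 0, ψ a ≤ M + η * ρ ^ 2 := by
    intro η hη
    set φ := fun x => ψ x + η * ‖x - c‖ ^ 2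
    have hφ : ContinuousOn φ (closedBall c ρ) := hψ.add (by fun_prop)
    have hmeanφ : ∀ p ∈ ball c ρ, ∃ r > 0, sphere p r ⊆ closedBall c ρ ∧
        φ p < circleAverage φ p r := by
      intro p hp
      obtain ⟨r, hr, hsub, hle⟩ := hmean p hp
      refine ⟨r, hr, hsub, ?_⟩
      have hquad : circleAverage (fun x => η * ‖x - c‖ ^ 2) p r = η * (‖p - c‖ ^ 2 + r ^ 2) := by
        rw [← circleAverage_norm_sub_sq]; exact circleAverage_fun_smul (𝕜 := ℝ) (E := ℝ)
      rw [circleAverage_fun_add ((hψ.mono hsub).circleIntegrable hr.le)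
        (by apply ContinuousOn.circleIntegrable hr.le; fun_prop), hquad]
      have : 0 < η * r ^ 2 := by positivity
      linarith
    obtain ⟨q, hq, hmax⟩ := exists_mem_sphere_isMaxOn_of_lt_circleAverage hφ hmeanφ ⟨a, ha⟩
    have hqc : ‖q - c‖ = ρ := by rwa [mem_sphere, dist_eq_norm] at hq
    calc ψ a ≤ φ a := le_add_of_nonneg_right (by positivity)
      _ ≤ φ q := hmax ha
      _ = ψ q + η * ρ ^ 2 := by rw [← hqc]
      _ ≤ M + η * ρ ^ 2 := by gcongr; exact hM q hq
  refine ge_of_tendsto (x := 𝓝[>] 0) ?_ (eventually_nhdsWithin_of_forall hperturbed)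
  exact ((continuous_const.add (continuous_id.mul continuous_const)).tendsto' (0 : ℝ) M
    (by simp)).mono_left nhdsWithin_le_nhds

def puncturedDisc (R : ℝ) : Set ℂ := {ζ | 0 < ‖ζ‖ ∧ ‖ζ‖ < R}

theorem isOpen_puncturedDisc (R : ℝ) : IsOpen (puncturedDisc R) :=
  (isOpen_lt continuous_const continuous_norm).inter (isOpen_lt continuous_norm continuous_const)

def TwistedSubmeanOnPuncturedDisc (f : ℂ → ℝ) (R : ℝ) : Prop :=
  ∀ ε : ℝ, 0 < ε →
    (∀ a : ℂ, 0 < ‖a‖ → ‖a‖ < R → ∀ r : ℝ, 0 < r → closedBall a r ⊆ puncturedDisc R →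
      f a * ‖a‖ ^ ε ≤ circleAverage (fun ζ => f ζ * ‖ζ‖ ^ ε) a r) ∧
    Tendsto (fun ζ => f ζ * ‖ζ‖ ^ ε) (𝓝[≠] 0) (𝓝 0)

namespace TwistedSubmeanOnPuncturedDisc

variable {f : ℂ → ℝ} {R : ℝ}

theorem continuousOn_mul_rpow (htw : TwistedSubmeanOnPuncturedDisc f R)
    (hf : ContinuousOn f (puncturedDisc R)) {ε : ℝ} (hε : 0 < ε) :
    ContinuousOn (fun ζ => f ζ * ‖ζ‖ ^ ε) (ball 0 R) := by
  intro ζ hζ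
  refine ContinuousAt.continuousWithinAt ?_
  rcases eq_or_ne ζ 0 with rfl | hζ0
  · rw [continuousAt_iff_punctured_nhds]
    simpa [zero_rpow hε.ne'] using (htw ε hε).2
  · have hmem : ζ ∈ puncturedDisc R := ⟨norm_pos_iff.2 hζ0, mem_ball_zero_iff.1 hζ⟩
    exact (hf.continuousAt ((isOpen_puncturedDisc R).mem_nhds hmem)).mul
      (continuous_norm.continuousAt.rpow_const (Or.inr hε.le))

theorem exists_le_circleAverage_mul_rpow (htw : TwistedSubmeanOnPuncturedDisc f R)
    (hf0 : ∀ ζ ∈ puncturedDisc R, 0 ≤ f ζ) {R' ε : ℝ} (hR' : R' < R) (hε : 0 < ε)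
    {p : ℂ} (hp : p ∈ ball 0 R') :
    ∃ r > 0, sphere p r ⊆ closedBall 0 R' ∧
      f p * ‖p‖ ^ ε ≤ circleAverage (fun ζ => f ζ * ‖ζ‖ ^ ε) p r := by
  rw [mem_ball_zero_iff] at hp
  rcases eq_or_ne p 0 with rfl | hp0
  · have hR'0 : 0 < R' := by simpa using hp
    refine ⟨R' / 2, by positivity, sphere_subset_closedBall.trans (closedBall_subset_closedBall
      (by linarith)), ?_⟩
    rw [norm_zero, zero_rpow hε.ne', mul_zero]
    refine circleAverage_nonneg_of_nonneg fun x hx => mul_nonneg (hf0 x ?_) (by positivity)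
    rw [mem_sphere_zero_iff_norm, abs_of_pos (by positivity)] at hx
    exact ⟨by linarith, by linarith⟩
  · obtain ⟨r, hr, hball⟩ := nhds_basis_closedBall.mem_iff.1 <|
      (isOpen_puncturedDisc R').mem_nhds ⟨norm_pos_iff.2 hp0, hp⟩
    refine ⟨r, hr, sphere_subset_closedBall.trans fun x hx => ?_,
      (htw ε hε).1 p (norm_pos_iff.2 hp0) (hp.trans hR') r hr
        (hball.trans fun x hx => ⟨hx.1, hx.2.trans hR'⟩)⟩
    exact mem_closedBall_zero_iff.2 (hball hx).2.le

theorem le_of_forall_norm_eq_le (htw : TwistedSubmeanOnPuncturedDisc f R)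
    (hf : ContinuousOn f (puncturedDisc R)) (hf0 : ∀ ζ ∈ puncturedDisc R, 0 ≤ f ζ)
    {R' C : ℝ} (hR' : R' < R) (hC : ∀ ζ : ℂ, ‖ζ‖ = R' → f ζ ≤ C)
    {a : ℂ} (ha : 0 < ‖a‖) (haR' : ‖a‖ ≤ R') : f a ≤ C := by
  have htwisted : ∀ ε : ℝ, 0 < ε → f a * ‖a‖ ^ ε ≤ C * R' ^ ε := fun ε hε =>
    le_of_forall_mem_sphere_le_of_le_circleAverage (ψ := fun ζ => f ζ * ‖ζ‖ ^ ε)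
      ((htw.continuousOn_mul_rpow hf hε).mono (closedBall_subset_ball hR'))
      (fun p hp => htw.exists_le_circleAverage_mul_rpow hf0 hR' hε hp)
      (fun ζ hζ => by
        rw [mem_sphere_zero_iff_norm] at hζ
        calc f ζ * ‖ζ‖ ^ ε ≤ C * ‖ζ‖ ^ ε := by gcongr; exact hC ζ hζ
          _ = C * R' ^ ε := by rw [hζ])
      (mem_closedBall_zero_iff.2 haR')
  have hlim : ∀ {x : ℝ}, 0 < x → ∀ y : ℝ, Tendsto (fun ε : ℝ => y * x ^ ε) (𝓝[>] 0) (𝓝 y) :=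
    fun hx y => by
      simpa using ((continuousAt_const_rpow (b := 0) hx.ne').tendsto.const_mul y).mono_left
        nhdsWithin_le_nhds
  exact le_of_tendsto_of_tendsto (hlim ha _) (hlim (ha.trans_le haR') _)
    (eventually_nhdsWithin_of_forall htwisted)

end TwistedSubmeanOnPuncturedDisc

def puncturedPolydisk (n l : ℕ) (R : ℝ) : Set (EuclideanSpace ℂ (Fin n)) :=
  {z | ∀ i : Fin n, ‖z i‖ < R ∧ ((i : ℕ) < l → 0 < ‖z i‖)}

def torusFiber {n : ℕ} (l : ℕ) (R' : ℝ) (z : EuclideanSpace ℂ (Fin n)) :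
    Set (EuclideanSpace ℂ (Fin n)) :=
  {w | (∀ i : Fin n, (i : ℕ) < l → ‖w i‖ = R') ∧ ∀ k : Fin n, l ≤ (k : ℕ) → w k = z k}

section Polydisk

variable {n l : ℕ} {R R' : ℝ}

theorem update_mem_puncturedPolydisk {z : EuclideanSpace ℂ (Fin n)}
    (hz : z ∈ puncturedPolydisk n l R) (i : Fin n) {ζ : ℂ} (hζ : ζ ∈ puncturedDisc R) :
    WithLp.toLp 2 (Function.update z i ζ) ∈ puncturedPolydisk n l R := by
  intro j
  rcases eq_or_ne j i with rfl | hji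
  · simp [hζ.1, hζ.2]
  · simpa [hji] using hz j

theorem torusFiber_update {z : EuclideanSpace ℂ (Fin n)} {i : Fin n} (hi : (i : ℕ) < l)
    (ζ : ℂ) : torusFiber l R' (WithLp.toLp 2 (Function.update z i ζ)) = torusFiber l R' z := by
  have hfix : ∀ k : Fin n, l ≤ (k : ℕ) → Function.update z i ζ k = z k :=
    fun k hk => Function.update_of_ne (by rintro rfl; omega) _ _
  ext w
  simp +contextual only [torusFiber, Set.mem_ofPred_eq, hfix]

theorem torusFiber_subset_puncturedPolydisk (hR'0 : 0 < R') (hR' : R' < R)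
    {z : EuclideanSpace ℂ (Fin n)} (hz : z ∈ puncturedPolydisk n l R) :
    torusFiber l R' z ⊆ puncturedPolydisk n l R := by
  intro w ⟨hw, hwz⟩ j
  rcases lt_or_ge (j : ℕ) l with hj | hj
  · rw [hw j hj]
    exact ⟨hR', fun _ => hR'0⟩
  · rw [hwz j hj]
    exact hz j

theorem isCompact_torusFiber (z : EuclideanSpace ℂ (Fin n)) :
    IsCompact (torusFiber l R' z) := by
  have hpi : torusFiber l R' z = WithLp.ofLp ⁻¹'
      Set.univ.pi fun i : Fin n => if (i : ℕ) < l then sphere (0 : ℂ) R' else {z i} := by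
    ext w
    simp only [torusFiber, Set.mem_ofPred_eq, Set.mem_preimage, Set.mem_univ_pi, ← forall_and]
    refine forall_congr' fun i => ?_
    split_ifs with hi <;> simp [hi, not_lt.1]
  rw [hpi]
  refine (PiLp.homeomorph 2 _).isCompact_preimage.2 (isCompact_univ_pi fun i => ?_)
  split_ifs
  exacts [isCompact_sphere _ _, isCompact_singleton]

variable {H : EuclideanSpace ℂ (Fin n) → ℝ}

theorem le_of_forall_norm_eq_update_le (hR' : R' < R)
    (hH : ContinuousOn H (puncturedPolydisk n l R))
    (hH0 : ∀ z ∈ puncturedPolydisk n l R, 0 ≤ H z)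
    {z : EuclideanSpace ℂ (Fin n)} (hz : z ∈ puncturedPolydisk n l R) {i : Fin n}
    (hi : (i : ℕ) < l)
    (htw : TwistedSubmeanOnPuncturedDisc (fun ζ => H (WithLp.toLp 2 (Function.update z i ζ))) R)
    (hzi : ‖z i‖ ≤ R') {C : ℝ}
    (hC : ∀ ζ : ℂ, ‖ζ‖ = R' → H (WithLp.toLp 2 (Function.update z i ζ)) ≤ C) : H z ≤ C := by
  have hslice : Set.MapsTo (fun ζ => WithLp.toLp 2 (Function.update z i ζ)) (puncturedDisc R)
      (puncturedPolydisk n l R) := fun ζ hζ => update_mem_puncturedPolydisk hz i hζ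
  simpa using htw.le_of_forall_norm_eq_le (hH.comp (by fun_prop) hslice)
    (fun ζ hζ => hH0 _ (hslice hζ)) hR' hC ((hz i).2 hi) hzi

theorem le_sSup_image_torusFiber (hR'0 : 0 < R') (hR' : R' < R)
    (hH : ContinuousOn H (puncturedPolydisk n l R))
    (hH0 : ∀ z ∈ puncturedPolydisk n l R, 0 ≤ H z)
    (htw : ∀ i : Fin n, (i : ℕ) < l → ∀ z ∈ puncturedPolydisk n l R,
      TwistedSubmeanOnPuncturedDisc (fun ζ => H (WithLp.toLp 2 (Function.update z i ζ))) R)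
    {z : EuclideanSpace ℂ (Fin n)} (hz : z ∈ puncturedPolydisk n l R)
    (hzR' : ∀ i : Fin n, (i : ℕ) < l → ‖z i‖ ≤ R') :
    H z ≤ sSup (H '' torusFiber l R' z) := by
  suffices hfree : ∀ s : Finset (Fin n), ∀ z ∈ puncturedPolydisk n l R,
      (∀ i : Fin n, (i : ℕ) < l → ‖z i‖ ≤ R') →
      (∀ i : Fin n, (i : ℕ) < l → i ∉ s → ‖z i‖ = R') → H z ≤ sSup (H '' torusFiber l R' z) from
    hfree Finset.univ z hz hzR' fun i _ hi => absurd (Finset.mem_univ i) hi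
  intro s
  induction s using Finset.induction_on with
  | empty =>
    intro z hz _ hzT
    have hbdd : BddAbove (H '' torusFiber l R' z) := (isCompact_torusFiber z).bddAbove_image
      (hH.mono (torusFiber_subset_puncturedPolydisk hR'0 hR' hz))
    exact le_csSup hbdd ⟨z, ⟨fun i hi => hzT i hi (Finset.notMem_empty i), fun _ _ => rfl⟩, rfl⟩
  | insert i s _ ih =>
    intro z hz hzR' hzT
    by_cases hi : (i : ℕ) < l
    · refine le_of_forall_norm_eq_update_le hR' hH hH0 hz hi (htw i hi z hz) (hzR' i hi)
        fun ζ hζ => ?_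
      rw [← torusFiber_update hi ζ]
      refine ih _ (update_mem_puncturedPolydisk hz i ⟨by linarith, by linarith⟩) ?_ ?_
      · intro j hj
        rcases eq_or_ne j i with rfl | hji
        · simp [hζ]
        · simpa [hji] using hzR' j hj
      · intro j hj hjs
        rcases eq_or_ne j i with rfl | hji
        · simp [hζ]
        · simpa [hji] using hzT j hj (by simp [hji, hjs])
    · exact ih z hz hzR' fun j hj hjs => hzT j hj (by simp [hjs]; omega)

end Polydisk

theorem twisted_maximum_principle_polydisk_general (n l : ℕ)
    (R R' : ℝ) (hR'0 : 0 < R') (hR'R : R' < R)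
    (A : Set (EuclideanSpace ℂ (Fin n)))
    (hA : A = {z : EuclideanSpace ℂ (Fin n) | ∀ i : Fin n,
      ‖z i‖ < R ∧ ((i : ℕ) < l → 0 < ‖z i‖)})
    (H : EuclideanSpace ℂ (Fin n) → ℝ)
    (hcont : ContinuousOn H A)
    (hnonneg : ∀ z ∈ A, 0 ≤ H z)
    (hsub : ∀ ε : ℝ, 0 < ε → ∀ i : Fin n, (i : ℕ) < l → ∀ z ∈ A,
      (∀ a : ℂ, 0 < ‖a‖ → ‖a‖ < R → ∀ r : ℝ, 0 < r →
        Metric.closedBall a r ⊆ {ζ : ℂ | 0 < ‖ζ‖ ∧ ‖ζ‖ < R} →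
        H (WithLp.toLp 2 (Function.update z i a)) * ‖a‖ ^ ε ≤ (2 * Real.pi)⁻¹ *
          ∫ θ in (0:ℝ)..(2 * Real.pi),
            H (WithLp.toLp 2 (Function.update z i (a + r * Complex.exp (θ * Complex.I)))) *
              ‖a + r * Complex.exp (θ * Complex.I)‖ ^ ε) ∧
      Filter.Tendsto (fun ζ : ℂ => H (WithLp.toLp 2 (Function.update z i ζ)) * ‖ζ‖ ^ ε)
        (nhdsWithin 0 {ζ : ℂ | ζ ≠ 0}) (nhds 0)) :
    ∀ z ∈ A, (∀ i : Fin n, (i : ℕ) < l → ‖z i‖ ≤ R') →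
      H z ≤ sSup (H '' {w : EuclideanSpace ℂ (Fin n) |
        (∀ i : Fin n, (i : ℕ) < l → ‖w i‖ = R') ∧
        ∀ k : Fin n, l ≤ (k : ℕ) → w k = z k}) := by
  subst hA
  -- `circleAverage g a r` unfolds to the average `(2π)⁻¹ ∫₀^{2π} g (a + r e^{iθ}) dθ` in `hsub`.
  exact fun z hz hzR' => le_sSup_image_torusFiber hR'0 hR'R hcont hnonneg
    (fun i hi z hz ε hε => hsub ε hε i hi z hz) hz hzR'

/-- Proposition 7.4 (scalar content): maximum principle on a partially
punctured polydisk, obtained by applying the one-variable twisted maximum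
principle in each punctured coordinate. -/
theorem twisted_maximum_principle_polydisk (n l : ℕ) (hl : 1 ≤ l) (hln : l ≤ n)
    (R R' : ℝ) (hR'0 : 0 < R') (hR'R : R' < R) (hR : R ≤ 1)
    (A : Set (EuclideanSpace ℂ (Fin n)))
    (hA : A = {z : EuclideanSpace ℂ (Fin n) | ∀ i : Fin n,
      ‖z i‖ < R ∧ ((i : ℕ) < l → 0 < ‖z i‖)})
    (H : EuclideanSpace ℂ (Fin n) → ℝ)
    (hcont : ContinuousOn H A)
    (hnonneg : ∀ z ∈ A, 0 ≤ H z)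
    (hsub : ∀ ε : ℝ, 0 < ε → ∀ i : Fin n, (i : ℕ) < l → ∀ z ∈ A,
      (∀ a : ℂ, 0 < ‖a‖ → ‖a‖ < R → ∀ r : ℝ, 0 < r →
        Metric.closedBall a r ⊆ {ζ : ℂ | 0 < ‖ζ‖ ∧ ‖ζ‖ < R} →
        H (WithLp.toLp 2 (Function.update z i a)) * ‖a‖ ^ ε ≤ (2 * Real.pi)⁻¹ *
          ∫ θ in (0:ℝ)..(2 * Real.pi),
            H (WithLp.toLp 2 (Function.update z i (a + r * Complex.exp (θ * Complex.I)))) *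
              ‖a + r * Complex.exp (θ * Complex.I)‖ ^ ε) ∧
      Filter.Tendsto (fun ζ : ℂ => H (WithLp.toLp 2 (Function.update z i ζ)) * ‖ζ‖ ^ ε)
        (nhdsWithin 0 {ζ : ℂ | ζ ≠ 0}) (nhds 0)) :
    ∀ z ∈ A, (∀ i : Fin n, (i : ℕ) < l → ‖z i‖ ≤ R') →
      H z ≤ sSup (H '' {w : EuclideanSpace ℂ (Fin n) |
        (∀ i : Fin n, (i : ℕ) < l → ‖w i‖ = R') ∧
        ∀ k : Fin n, l ≤ (k : ℕ) → w k = z k}) :=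
  twisted_maximum_principle_polydisk_general n l R R' hR'0 hR'R A hA H hcont hnonneg hsub
end
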